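/- arXiv:2112.07387 — 2 statements merged into one kernel-verified Lean document; each statement's English description precedes it below -/
import Mathlib

section
/- Let n ∈ ℕ (n ≥ 1) and let I be a proper open subinterval of ℝ. If f : I → ℝ is Jensen convex of order n, then for every compact subinterval [a,b] ⊆ I there exists a constant L ≥ 0 such that |f(x) − f(y)| ≤ L·|x − y| for all rational x, y ∈ [a,b] ∩ ℚ; that is, f is Lipschitz on the rational points of every compact subinterval of I. -/
/-!
On an arithmetic progression `y, y + h, …` in `I`, the `(n+1)`-st divided difference of `f` over
consecutive nodes is `Δ_h^{n+1} f(y) / ((n+1)! h^{n+1}) ≥ 0`. Over any other `n + 2` nodes of the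
progression it is a convex combination of the two divided differences obtained by moving an end
node into a gap, and both of these live on a shorter progression. Finitely many rationals lie on one
progression, so `f` is `n`-convex on `I ∩ ℚ`.

The `n`-th divided differences of an `n`-convex function increase in each node, so over rational
nodes in `[a, b]` they are bounded by their values over rational nodes left of `a` and right of `b`.
Moving one node changes a divided difference by the displacement times a divided difference with
one more node, so a bound for `k + 1` nodes gives one for `k` nodes. For two nodes this is the
Lipschitz bound.
-/

open Finset

/-- The difference operator `Δ_h`. -/
noncomputable def dOp (h : ℝ) (f : ℝ → ℝ) : ℝ → ℝ := fun x => f (x + h) - f x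

/-- Iterated difference operator `Δ_{h_1} ⋯ Δ_{h_k}` for a list `[h_1, …, h_k]`. -/
noncomputable def dList (l : List ℝ) (f : ℝ → ℝ) : ℝ → ℝ := l.foldr dOp f

/-- The divided difference `[x_0, …, x_m; f]`. -/
noncomputable def divDiff (m : ℕ) (x : Fin (m + 1) → ℝ) (f : ℝ → ℝ) : ℝ :=
  ∑ i, f (x i) / ∏ j ∈ Finset.univ.erase i, (x i - x j)

/-- `I` is a proper open subinterval of the real line. -/
def ProperOpenInterval (I : Set ℝ) : Prop :=
  IsOpen I ∧ I.OrdConnected ∧ I.Nonempty ∧ I ≠ Set.univ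

/-- A real number which is rational. -/
def IsRatR (x : ℝ) : Prop := ∃ q : ℚ, (q : ℝ) = x

/-- `f` is Wright convex of order `n` on `I`. -/
def WrightConvexOrder (n : ℕ) (I : Set ℝ) (f : ℝ → ℝ) : Prop :=
  ∀ l : List ℝ, l.length = n + 1 → (∀ h ∈ l, 0 < h) →
    ∀ x : ℝ, x ∈ I → x + l.sum ∈ I → 0 ≤ dList l f x

/-- `f` is Jensen convex of order `n` on `I`. -/
def JensenConvexOrder (n : ℕ) (I : Set ℝ) (f : ℝ → ℝ) : Prop :=
  ∀ h : ℝ, 0 < h → ∀ x : ℝ, x ∈ I → x + (n + 1) * h ∈ I → 0 ≤ (dOp h)^[n + 1] f x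

/-- `f` is convex of order `n` on `I`. -/
def ConvexOrder (n : ℕ) (I : Set ℝ) (f : ℝ → ℝ) : Prop :=
  ∀ x : Fin (n + 2) → ℝ, Function.Injective x → (∀ i, x i ∈ I) →
    0 ≤ divDiff (n + 1) x f

noncomputable def divDiffFinset (s : Finset ℝ) (f : ℝ → ℝ) : ℝ :=
  ∑ i ∈ s, f i / ∏ j ∈ s.erase i, (i - j)

section DivDiffFinset

variable {f : ℝ → ℝ}

@[simp]
lemma divDiffFinset_singleton (a : ℝ) : divDiffFinset {a} f = f a := by
  simp [divDiffFinset]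

lemma divDiffFinset_erase {s : Finset ℝ} {a : ℝ} (ha : a ∈ s) :
    divDiffFinset (s.erase a) f = ∑ i ∈ s, f i * (i - a) / ∏ j ∈ s.erase i, (i - j) := by
  rw [divDiffFinset, ← sum_erase s (a := a) (by simp)]
  refine sum_congr rfl fun i hi => ?_
  have hia := ne_of_mem_erase hi
  rw [← mul_prod_erase (s.erase i) (fun j => i - j) (mem_erase.2 ⟨hia.symm, ha⟩),
    erase_right_comm, mul_comm (i - a), mul_div_mul_right _ _ (sub_ne_zero.2 hia)]

lemma divDiffFinset_erase_sub_erase {s : Finset ℝ} {a b : ℝ} (ha : a ∈ s) (hb : b ∈ s) :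
    divDiffFinset (s.erase a) f - divDiffFinset (s.erase b) f = (b - a) * divDiffFinset s f := by
  rw [divDiffFinset_erase ha, divDiffFinset_erase hb, divDiffFinset, ← sum_sub_distrib, mul_sum]
  exact sum_congr rfl fun i _ => by ring

lemma divDiffFinset_insert_sub_insert {T : Finset ℝ} {a b : ℝ} (ha : a ∉ T) (hb : b ∉ T)
    (hab : a ≠ b) :
    divDiffFinset (insert b T) f - divDiffFinset (insert a T) f =
      (b - a) * divDiffFinset (insert a (insert b T)) f := by
  have := divDiffFinset_erase_sub_erase (f := f) (mem_insert_self a (insert b T))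
    (mem_insert_of_mem (mem_insert_self b T))
  rwa [erase_insert (by simp [ha, hab]), erase_insert_of_ne hab, erase_insert hb] at this

lemma sub_eq_mul_divDiffFinset_pair (x y : ℝ) : f y - f x = (y - x) * divDiffFinset {x, y} f := by
  rcases eq_or_ne x y with rfl | hxy
  · simp
  · simpa using divDiffFinset_insert_sub_insert (f := f) (notMem_empty x) (notMem_empty y) hxy

lemma sub_mul_divDiffFinset_eq {s : Finset ℝ} {x y z : ℝ} (hx : x ∈ s) (hy : y ∈ s) (hz : z ∉ s) :
    (y - x) * divDiffFinset s f = (y - z) * divDiffFinset (insert z (s.erase x)) f +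
      (z - x) * divDiffFinset (insert z (s.erase y)) f := by
  have hzx : z ≠ x := ne_of_mem_of_not_mem hx hz |>.symm
  have hzy : z ≠ y := ne_of_mem_of_not_mem hy hz |>.symm
  have h₁ := divDiffFinset_erase_sub_erase (f := f) (mem_insert_of_mem (b := z) hx)
    (mem_insert_of_mem hy)
  have h₂ := divDiffFinset_erase_sub_erase (f := f) (mem_insert_of_mem (b := z) hx)
    (mem_insert_self z s)
  rw [erase_insert_of_ne hzx, erase_insert_of_ne hzy] at h₁
  rw [erase_insert_of_ne hzx, erase_insert hz] at h₂
  linear_combination (z - x) * h₁ - (y - x) * h₂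

lemma divDiffFinset_nonneg_of_insert_erase {s : Finset ℝ} {x y z : ℝ} (hx : x ∈ s) (hy : y ∈ s)
    (hz : z ∉ s) (hxz : x ≤ z) (hzy : z ≤ y) (h₁ : 0 ≤ divDiffFinset (insert z (s.erase x)) f)
    (h₂ : 0 ≤ divDiffFinset (insert z (s.erase y)) f) : 0 ≤ divDiffFinset s f := by
  have hxy : 0 < y - x := by linarith [lt_of_le_of_ne hxz (ne_of_mem_of_not_mem hx hz)]
  refine nonneg_of_mul_nonneg_right ((sub_mul_divDiffFinset_eq hx hy hz).symm ▸ ?_) hxy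
  exact add_nonneg (mul_nonneg (by linarith) h₁) (mul_nonneg (by linarith) h₂)

end DivDiffFinset

noncomputable def arithProg (y h : ℝ) (m : ℕ) : Finset ℝ :=
  (range m).image fun i : ℕ => y + i * h

section ArithProg

variable {y h : ℝ} {m : ℕ}

lemma mem_arithProg {z : ℝ} : z ∈ arithProg y h m ↔ ∃ i < m, y + i * h = z := by
  simp [arithProg]

lemma arithProg_succ (y h : ℝ) (m : ℕ) :
    arithProg y h (m + 1) = insert y (arithProg (y + h) h m) := by
  ext z
  simp only [mem_arithProg, mem_insert]
  constructor
  · rintro ⟨_ | i, hi, rfl⟩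
    · simp
    · exact Or.inr ⟨i, by omega, by push_cast; ring⟩
  · rintro (rfl | ⟨i, hi, rfl⟩)
    · exact ⟨0, by omega, by simp⟩
    · exact ⟨i + 1, by omega, by push_cast; ring⟩

lemma arithProg_succ' (y h : ℝ) (m : ℕ) :
    arithProg y h (m + 1) = insert (y + m * h) (arithProg y h m) := by
  rw [arithProg, range_add_one, image_insert, arithProg]

lemma card_arithProg (hh : h ≠ 0) : (arithProg y h m).card = m := by
  rw [arithProg, card_image_of_injective _ fun i j hij => by simpa [hh] using hij, card_range]

lemma left_notMem_arithProg (hh : h ≠ 0) : y ∉ arithProg (y + h) h m := by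
  rw [mem_arithProg]
  rintro ⟨i, -, hi⟩
  have : ((i : ℝ) + 1) * h = 0 := by linarith
  simp [hh] at this
  linarith

lemma add_mul_notMem_arithProg (hh : h ≠ 0) : y + m * h ∉ arithProg y h m := by
  rw [mem_arithProg]
  rintro ⟨i, hi, hi'⟩
  simp [hh] at hi'
  omega

lemma mem_Icc_of_mem_arithProg (hh : 0 ≤ h) {z : ℝ} (hz : z ∈ arithProg y h (m + 1)) :
    z ∈ Set.Icc y (y + m * h) := by
  obtain ⟨i, hi, rfl⟩ := mem_arithProg.1 hz
  have : (i : ℝ) ≤ m := by exact_mod_cast Nat.lt_succ_iff.1 hi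
  constructor <;> nlinarith

lemma iterate_dOp_eq_mul_divDiffFinset (hh : h ≠ 0) (f : ℝ → ℝ) (m : ℕ) (y : ℝ) :
    (dOp h)^[m] f y = m.factorial * h ^ m * divDiffFinset (arithProg y h (m + 1)) f := by
  induction m generalizing y with
  | zero => simp [arithProg]
  | succ m ih =>
    have h₁ : (arithProg y h (m + 2)).erase y = arithProg (y + h) h (m + 1) := by
      rw [arithProg_succ, erase_insert (left_notMem_arithProg hh)]
    have h₂ : (arithProg y h (m + 2)).erase (y + ↑(m + 1) * h) = arithProg y h (m + 1) := by
      rw [arithProg_succ', erase_insert (add_mul_notMem_arithProg hh)]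
    have key := divDiffFinset_erase_sub_erase (f := f)
      (by rw [arithProg_succ]; exact mem_insert_self _ _ : y ∈ arithProg y h (m + 2))
      (by rw [arithProg_succ']; exact mem_insert_self _ _ :
        y + ↑(m + 1) * h ∈ arithProg y h (m + 2))
    rw [h₁, h₂] at key
    rw [Function.iterate_succ_apply', dOp, ih, ih, Nat.factorial_succ]
    push_cast at key ⊢
    linear_combination ((m.factorial : ℝ) * h ^ m) * key

end ArithProg

lemma JensenConvexOrder.divDiffFinset_nonneg_of_subset_arithProg {n : ℕ} {I : Set ℝ}
    {f : ℝ → ℝ} (hf : JensenConvexOrder n I f) (hI : I.OrdConnected) {h : ℝ} (hh : 0 < h)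
    (G : ℕ) : ∀ (y : ℝ) (S : Finset ℝ), S ⊆ arithProg y h G → S.card = n + 2 → ↑S ⊆ I →
      0 ≤ divDiffFinset S f := by
  induction G with
  | zero =>
    intro y S hS hcard _
    simp [subset_empty.1 (by simpa [arithProg] using hS)] at hcard
  | succ G ih =>
    intro y S hS hcard hSI
    by_cases hy : y ∈ S; swap
    · exact ih (y + h) S ((subset_insert_iff_of_notMem hy).1 (arithProg_succ y h G ▸ hS)) hcard hSI
    by_cases htop : y + G * h ∈ S; swap
    · exact ih y S ((subset_insert_iff_of_notMem htop).1 (arithProg_succ' y h G ▸ hS)) hcard hSI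
    by_cases hfull : arithProg y h (G + 1) ⊆ S
    · obtain rfl : S = arithProg y h (G + 1) := hS.antisymm hfull
      obtain rfl : G = n + 1 := by rw [card_arithProg hh.ne'] at hcard; omega
      have hΔ := hf h hh y (hSI hy) (by exact_mod_cast hSI htop)
      rw [iterate_dOp_eq_mul_divDiffFinset hh.ne'] at hΔ
      exact nonneg_of_mul_nonneg_right hΔ (by positivity)
    obtain ⟨z, hz, hzS⟩ := not_subset.1 hfull
    have hzI : z ∈ I := hI.out (hSI hy) (hSI htop) (mem_Icc_of_mem_arithProg hh.le hz)
    have hcard' : ∀ x ∈ S, (insert z (S.erase x)).card = n + 2 := fun x hx => by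
      rw [card_insert_of_notMem (fun h => hzS (mem_of_mem_erase h)), card_erase_of_mem hx]
      omega
    have hI' : ∀ x, (↑(insert z (S.erase x)) : Set ℝ) ⊆ I := fun x => by
      rw [coe_insert]
      exact Set.insert_subset hzI ((coe_subset.2 (erase_subset x S)).trans hSI)
    refine divDiffFinset_nonneg_of_insert_erase hy htop hzS (mem_Icc_of_mem_arithProg hh.le hz).1
      (mem_Icc_of_mem_arithProg hh.le hz).2 ?_ ?_
    · refine ih (y + h) _ ?_ (hcard' y hy) (hI' y)
      rw [← erase_insert (left_notMem_arithProg (m := G) hh.ne'), ← arithProg_succ]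
      exact insert_subset (mem_erase.2 ⟨ne_of_mem_of_not_mem hy hzS |>.symm, hz⟩)
        (erase_subset_erase y hS)
    · refine ih y _ ?_ (hcard' _ htop) (hI' _)
      rw [← erase_insert (add_mul_notMem_arithProg (y := y) hh.ne'), ← arithProg_succ']
      exact insert_subset (mem_erase.2 ⟨ne_of_mem_of_not_mem htop hzS |>.symm, hz⟩)
        (erase_subset_erase _ hS)

lemma exists_nat_mul_eq_int (S : Finset ℝ) (hS : ∀ x ∈ S, IsRatR x) :
    ∃ N : ℕ, 0 < N ∧ ∀ x ∈ S, ∃ k : ℤ, x * N = k := by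
  induction S using Finset.induction_on with
  | empty => exact ⟨1, one_pos, by simp⟩
  | insert x S _ ih =>
    obtain ⟨N, hN, hNS⟩ := ih fun y hy => hS y (mem_insert_of_mem hy)
    obtain ⟨q, rfl⟩ := hS x (mem_insert_self x S)
    refine ⟨N * q.den, by positivity, (forall_mem_insert _ _ _).2 ⟨⟨q.num * N, ?_⟩, fun y hy => ?_⟩⟩
    · have hq : (q : ℝ) * q.den = q.num := by exact_mod_cast Rat.mul_den_eq_num q
      push_cast
      linear_combination (N : ℝ) * hq
    · obtain ⟨k, hk⟩ := hNS y hy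
      exact ⟨k * q.den, by push_cast; rw [← hk]; ring⟩

lemma exists_subset_arithProg (S : Finset ℝ) (hS : ∀ x ∈ S, IsRatR x) :
    ∃ y h G, 0 < h ∧ S ⊆ arithProg y h G := by
  obtain ⟨N, hN, hNS⟩ := exists_nat_mul_eq_int S hS
  obtain ⟨K, hK⟩ : ∃ K : ℕ, ∀ x ∈ S, |x * N| ≤ K :=
    ⟨⌈∑ x ∈ S, |x * N|⌉₊, fun x hx =>
      (single_le_sum (f := fun x : ℝ => |x * N|) (fun _ _ => abs_nonneg _) hx).trans
        (Nat.le_ceil _)⟩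
  refine ⟨-(K : ℝ) / N, 1 / N, 2 * K + 1, by positivity, fun x hx => mem_arithProg.2 ?_⟩
  obtain ⟨k, hk⟩ := hNS x hx
  have hkK : |k| ≤ (K : ℤ) := by exact_mod_cast hk ▸ hK x hx
  obtain ⟨hk₁, hk₂⟩ := abs_le.1 hkK
  refine ⟨(k + K).toNat, by omega, ?_⟩
  have hcast : (((k + K).toNat : ℕ) : ℝ) = k + K := by exact_mod_cast Int.toNat_of_nonneg (by omega)
  rw [hcast, ← hk]
  field_simp
  ring

lemma divDiff_eq_divDiffFinset {m : ℕ} {x : Fin (m + 1) → ℝ} (hx : Function.Injective x)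
    (f : ℝ → ℝ) : divDiff m x f = divDiffFinset (univ.map ⟨x, hx⟩) f := by
  rw [divDiff, divDiffFinset, sum_map]
  refine sum_congr rfl fun i _ => ?_
  rw [← map_erase, prod_map]
  rfl

lemma convexOrder_iff_divDiffFinset_nonneg {n : ℕ} {P : Set ℝ} {f : ℝ → ℝ} :
    ConvexOrder n P f ↔
      ∀ S : Finset ℝ, ↑S ⊆ P → S.card = n + 2 → 0 ≤ divDiffFinset S f := by
  refine ⟨fun hf S hSP hS => ?_, fun hf x hx hxP => ?_⟩
  · have := hf _ (S.orderEmbOfFin hS).injective fun i => hSP (S.orderEmbOfFin_mem hS i)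
    rw [divDiff_eq_divDiffFinset (S.orderEmbOfFin hS).injective, map_eq_image] at this
    simpa only [Function.Embedding.coeFn_mk, S.image_orderEmbOfFin_univ hS] using this
  · rw [divDiff_eq_divDiffFinset hx]
    exact hf _ (by simpa [Set.subset_def] using hxP) (by simp)

lemma JensenConvexOrder.convexOrder_inter_isRatR {n : ℕ} {I : Set ℝ} {f : ℝ → ℝ}
    (hf : JensenConvexOrder n I f) (hI : I.OrdConnected) :
    ConvexOrder n (I ∩ {x | IsRatR x}) f := by
  refine convexOrder_iff_divDiffFinset_nonneg.2 fun S hS hcard => ?_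
  obtain ⟨y, h, G, hh, hSG⟩ := exists_subset_arithProg S fun x hx => (hS hx).2
  exact hf.divDiffFinset_nonneg_of_subset_arithProg hI hh G y S hSG hcard fun x hx => (hS hx).1

lemma le_add_card_sdiff_mul_of_exchange {α : Type*} [DecidableEq α] (φ : Finset α → ℝ) (e : ℝ)
    (m : ℕ) : ∀ s t : Finset α, (s \ t).card = m → s.card = t.card →
      (∀ a ∈ s \ t, ∀ c ∈ t \ s, ∀ T ⊆ s ∪ t, a ∉ T → c ∉ T → T.card + 1 = s.card →
        φ (insert c T) ≤ φ (insert a T) + e) →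
      φ t ≤ φ s + m * e := by
  induction m with
  | zero =>
    intro s t hm hst _
    obtain rfl := eq_of_subset_of_card_le (sdiff_eq_empty_iff_subset.1 (card_eq_zero.1 hm)) hst.ge
    simp
  | succ m ih =>
    intro s t hm hst step
    obtain ⟨a, ha⟩ : (s \ t).Nonempty := card_pos.1 (by omega)
    obtain ⟨c, hc⟩ : (t \ s).Nonempty := card_pos.1 (by rw [← card_sdiff_comm hst]; omega)
    obtain ⟨has, hat⟩ := mem_sdiff.1 ha
    obtain ⟨hct, hcs⟩ := mem_sdiff.1 hc
    have hcs' : c ∉ s.erase a := fun h => hcs (mem_of_mem_erase h)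
    have hcard : (insert c (s.erase a)).card = s.card := by
      rw [card_insert_of_notMem hcs', card_erase_of_mem has]
      have := card_pos.2 ⟨a, has⟩
      omega
    have h₁ := ih (insert c (s.erase a)) t
      (by rw [insert_sdiff_of_mem _ hct, erase_sdiff_comm, card_erase_of_mem ha, hm]; rfl)
      (hcard.trans hst) fun a' ha' c' hc' T hT ha'T hc'T hTc =>
        step a' (by grind) c' (by grind) T (fun x hx => by have := hT hx; grind) ha'T hc'T
          (hTc.trans hcard)
    have h₂ := step a ha c hc (s.erase a) ((erase_subset a s).trans subset_union_left)
      (notMem_erase a s) hcs' (by rw [card_erase_of_mem has]; have := card_pos.2 ⟨a, has⟩; omega)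
    rw [insert_erase has] at h₂
    push_cast
    linarith

section ConvexOrder

variable {n : ℕ} {P : Set ℝ} {f : ℝ → ℝ}

lemma ConvexOrder.divDiffFinset_insert_le_insert (hf : ConvexOrder n P f) {T : Finset ℝ}
    {x y : ℝ} (hT : T.card = n) (hx : x ∉ T) (hy : y ∉ T) (hxy : x < y)
    (hP : ↑(insert x (insert y T)) ⊆ P) :
    divDiffFinset (insert x T) f ≤ divDiffFinset (insert y T) f := by
  have hnonneg := convexOrder_iff_divDiffFinset_nonneg.1 hf _ hP (by
    rw [card_insert_of_notMem (by simp [hx, hxy.ne]), card_insert_of_notMem hy, hT])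
  have := divDiffFinset_insert_sub_insert (f := f) hx hy hxy.ne
  nlinarith [mul_nonneg (sub_nonneg.2 hxy.le) hnonneg]

lemma ConvexOrder.divDiffFinset_le_of_forall_lt (hf : ConvexOrder n P f) {s t : Finset ℝ}
    (hs : ↑s ⊆ P) (ht : ↑t ⊆ P) (hs_card : s.card = n + 1) (ht_card : t.card = n + 1)
    (hlt : ∀ x ∈ t, ∀ y ∈ s, x < y) : divDiffFinset t f ≤ divDiffFinset s f := by
  have := le_add_card_sdiff_mul_of_exchange (fun s => divDiffFinset s f) 0 _ s t rfl
    (hs_card.trans ht_card.symm) fun a ha c hc T hT haT hcT hTc => by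
      rw [add_zero]
      refine hf.divDiffFinset_insert_le_insert (by omega) hcT haT
        (hlt c (mem_sdiff.1 hc).1 a (mem_sdiff.1 ha).1) ?_
      have hP : (↑(s ∪ t) : Set ℝ) ⊆ P := by rw [coe_union]; exact Set.union_subset hs ht
      refine (coe_subset.2 (insert_subset (mem_union_right s (mem_sdiff.1 hc).1)
        (insert_subset (mem_union_left t (mem_sdiff.1 ha).1) hT))).trans hP
  simpa using this

end ConvexOrder

def DivDiffBoundedOn (f : ℝ → ℝ) (S : Set ℝ) (k : ℕ) : Prop :=
  ∃ M, 0 ≤ M ∧ ∀ s : Finset ℝ, ↑s ⊆ S → s.card = k → |divDiffFinset s f| ≤ M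

lemma ConvexOrder.divDiffBoundedOn_inter_Icc {n : ℕ} {P : Set ℝ} {f : ℝ → ℝ}
    (hf : ConvexOrder n P f) {a b : ℝ} {L U : Finset ℝ} (hLP : ↑L ⊆ P) (hL : L.card = n + 1)
    (hLa : ∀ x ∈ L, x < a) (hUP : ↑U ⊆ P) (hU : U.card = n + 1) (hbU : ∀ x ∈ U, b < x) :
    DivDiffBoundedOn f (P ∩ Set.Icc a b) (n + 1) := by
  refine ⟨max |divDiffFinset L f| |divDiffFinset U f|, by positivity, fun s hs hs_card => ?_⟩
  have hsP : ↑s ⊆ P := hs.trans Set.inter_subset_left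
  have hLs := hf.divDiffFinset_le_of_forall_lt hsP hLP hs_card hL fun x hx y hy =>
    (hLa x hx).trans_le (hs hy).2.1
  have hsU := hf.divDiffFinset_le_of_forall_lt hUP hsP hU hs_card fun x hx y hy =>
    (hs hx).2.2.trans_lt (hbU y hy)
  rw [abs_le]
  constructor
  · linarith [neg_abs_le (divDiffFinset L f), le_max_left |divDiffFinset L f| |divDiffFinset U f|]
  · linarith [le_abs_self (divDiffFinset U f), le_max_right |divDiffFinset L f| |divDiffFinset U f|]

section DivDiffBoundedOn

variable {f : ℝ → ℝ} {S : Set ℝ}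

lemma DivDiffBoundedOn.of_succ (hS : Bornology.IsBounded S) {k : ℕ}
    (h : DivDiffBoundedOn f S (k + 1)) : DivDiffBoundedOn f S k := by
  obtain ⟨M, hM0, hM⟩ := h
  by_cases hC : ∃ C : Finset ℝ, ↑C ⊆ S ∧ C.card = k
  swap
  · push Not at hC
    exact ⟨0, le_rfl, fun s hs hk => absurd hk (hC s hs)⟩
  obtain ⟨C, hCS, hCk⟩ := hC
  set e := Metric.diam S * M
  have he : 0 ≤ e := mul_nonneg Metric.diam_nonneg hM0
  refine ⟨|divDiffFinset C f| + k * e, by positivity, fun s hsS hsk => ?_⟩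
  have step : ∀ s t : Finset ℝ, ↑(s ∪ t) ⊆ S → s.card = k → ∀ a ∈ s \ t, ∀ c ∈ t \ s,
      ∀ T ⊆ s ∪ t, a ∉ T → c ∉ T → T.card + 1 = s.card →
      divDiffFinset (insert c T) f ≤ divDiffFinset (insert a T) f + e := by
    intro s t hst hsk a ha c hc T hT haT hcT hTs
    have hac : a ≠ c := fun h => (mem_sdiff.1 hc).2 (h ▸ (mem_sdiff.1 ha).1)
    have hU : insert a (insert c T) ⊆ s ∪ t :=
      insert_subset (mem_union_left t (mem_sdiff.1 ha).1)
        (insert_subset (mem_union_right s (mem_sdiff.1 hc).1) hT)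
    have hbound := hM _ ((coe_subset.2 hU).trans hst)
      (by rw [card_insert_of_notMem (by simp [hac, haT]), card_insert_of_notMem hcT]; omega)
    have hdist : |c - a| ≤ Metric.diam S := by
      rw [← Real.dist_eq]
      exact Metric.dist_le_diam_of_mem hS (hst (hU (by simp))) (hst (hU (by simp)))
    have : |divDiffFinset (insert c T) f - divDiffFinset (insert a T) f| ≤ e := by
      rw [divDiffFinset_insert_sub_insert haT hcT hac, abs_mul]
      exact mul_le_mul hdist hbound (abs_nonneg _) Metric.diam_nonneg
    linarith [le_abs_self (divDiffFinset (insert c T) f - divDiffFinset (insert a T) f)]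
  have hsC : (↑(s ∪ C) : Set ℝ) ⊆ S := by rw [coe_union]; exact Set.union_subset hsS hCS
  have h₁ := le_add_card_sdiff_mul_of_exchange (fun s => divDiffFinset s f) e _ s C rfl
    (hsk.trans hCk.symm) (step s C hsC hsk)
  have h₂ := le_add_card_sdiff_mul_of_exchange (fun s => divDiffFinset s f) e _ C s rfl
    (hCk.trans hsk.symm) (step C s (union_comm s C ▸ hsC) hCk)
  have hs' : ((s \ C).card : ℝ) * e ≤ k * e :=
    mul_le_mul_of_nonneg_right (by exact_mod_cast hsk ▸ card_le_card sdiff_subset) he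
  have hC' : ((C \ s).card : ℝ) * e ≤ k * e :=
    mul_le_mul_of_nonneg_right (by exact_mod_cast hCk ▸ card_le_card sdiff_subset) he
  rw [abs_le]
  constructor
  · linarith [neg_abs_le (divDiffFinset C f)]
  · linarith [le_abs_self (divDiffFinset C f)]

lemma DivDiffBoundedOn.of_le (hS : Bornology.IsBounded S) {k l : ℕ} (hkl : k ≤ l)
    (h : DivDiffBoundedOn f S l) : DivDiffBoundedOn f S k := by
  induction l, hkl using Nat.le_induction with
  | base => exact h
  | succ l _ ih => exact ih (h.of_succ hS)

lemma DivDiffBoundedOn.exists_lipschitz (h : DivDiffBoundedOn f S 2) :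
    ∃ L, 0 ≤ L ∧ ∀ x ∈ S, ∀ y ∈ S, |f x - f y| ≤ L * |x - y| := by
  obtain ⟨M, hM0, hM⟩ := h
  refine ⟨M, hM0, fun x hx y hy => ?_⟩
  rcases eq_or_ne y x with rfl | hxy
  · simp
  rw [sub_eq_mul_divDiffFinset_pair, abs_mul, mul_comm]
  refine mul_le_mul_of_nonneg_right (hM _ ?_ (card_pair hxy)) (abs_nonneg _)
  rw [coe_insert, coe_singleton]
  exact Set.insert_subset hy (Set.singleton_subset_iff.2 hx)

end DivDiffBoundedOn

lemma exists_finset_isRatR_subset_Ioo {x y : ℝ} (hxy : x < y) (k : ℕ) :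
    ∃ T : Finset ℝ, ↑T ⊆ Set.Ioo x y ∩ {t | IsRatR t} ∧ T.card = k := by
  obtain ⟨q₁, hxq₁, hq₁y⟩ := exists_rat_btwn hxy
  obtain ⟨q₂, hq₁q₂, hq₂y⟩ := exists_rat_btwn hq₁y
  refine Set.Infinite.exists_subset_card_eq (Set.Infinite.mono ?_
    ((Set.Ioo_infinite (by exact_mod_cast hq₁q₂)).image Rat.cast_injective.injOn)) k
  rintro _ ⟨q, hq, rfl⟩
  exact ⟨⟨hxq₁.trans (by exact_mod_cast hq.1), (by exact_mod_cast hq.2 : (q : ℝ) < q₂).trans hq₂y⟩,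
    q, rfl⟩

/-- An n-Jensen convex function is Lipschitz on the rational points of every compact
subinterval of I. -/
theorem jensen_convex_rational_lipschitz (n : ℕ) (hn : 1 ≤ n) (I : Set ℝ)
    (hI : ProperOpenInterval I) (f : ℝ → ℝ) (hf : JensenConvexOrder n I f) :
    ∀ a b : ℝ, a ≤ b → Set.Icc a b ⊆ I →
      ∃ L : ℝ, 0 ≤ L ∧ ∀ x ∈ Set.Icc a b, ∀ y ∈ Set.Icc a b,
        IsRatR x → IsRatR y → |f x - f y| ≤ L * |x - y| := by
  obtain ⟨hopen, hconn, -, -⟩ := hI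
  intro a b hab habI
  obtain ⟨l, hla, hlI⟩ := exists_Ioc_subset_of_mem_nhds
    (hopen.mem_nhds (habI ⟨le_rfl, hab⟩)) ⟨a - 1, by linarith⟩
  obtain ⟨u, hbu, huI⟩ := exists_Ico_subset_of_mem_nhds
    (hopen.mem_nhds (habI ⟨hab, le_rfl⟩)) ⟨b + 1, by linarith⟩
  obtain ⟨Lo, hLo, hLo_card⟩ := exists_finset_isRatR_subset_Ioo hla (n + 1)
  obtain ⟨Up, hUp, hUp_card⟩ := exists_finset_isRatR_subset_Ioo hbu (n + 1)
  have hbdd := (hf.convexOrder_inter_isRatR hconn).divDiffBoundedOn_inter_Icc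
    (fun x hx => ⟨hlI (Set.Ioo_subset_Ioc_self (hLo hx).1), (hLo hx).2⟩) hLo_card
    (fun x hx => (hLo hx).1.2)
    (fun x hx => ⟨huI (Set.Ioo_subset_Ico_self (hUp hx).1), (hUp hx).2⟩) hUp_card
    (fun x hx => (hUp hx).1.1)
  obtain ⟨L, hL0, hL⟩ := (hbdd.of_le ((Metric.isBounded_Icc a b).subset Set.inter_subset_right)
    (by omega : 2 ≤ n + 1)).exists_lipschitz
  exact ⟨L, hL0, fun x hx y hy hxq hyq => hL x ⟨⟨habI hx, hxq⟩, hx⟩ y ⟨⟨habI hy, hyq⟩, hy⟩⟩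
end

section
/- Let n ∈ ℕ (n ≥ 1) and let I be a proper open subinterval of ℝ. Suppose f : I → ℝ is Wright convex of order n, g : I → ℝ is continuous, and f(x) = g(x) for every rational x ∈ I. Then Δ_{h_0}Δ_{h_1}⋯Δ_{h_n} f(x) = Δ_{h_0}Δ_{h_1}⋯Δ_{h_n} g(x) for all real h_0, h_1, …, h_n > 0 and all x ∈ I ∩ (I − (h_0 + h_1 + ⋯ + h_n)). -/
open Finset

-- auxiliary lemmas

lemma dList_cons (a : ℝ) (l : List ℝ) (f : ℝ → ℝ) (x : ℝ) :
    dList (a :: l) f x = dList l f (x + a) - dList l f x := rfl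

instance : LeftCommutative dOp := by
  constructor
  intro a b f
  funext x
  simp only [dOp]
  rw [show x + b + a = x + a + b by ring]
  ring

lemma dList_perm {l l' : List ℝ} (p : l.Perm l') (f : ℝ → ℝ) : dList l f = dList l' f :=
  p.foldr_eq f

lemma dList_head_split (a b : ℝ) (m : List ℝ) (f : ℝ → ℝ) (x : ℝ) :
    dList ((a + b) :: m) f x = dList (a :: m) f x + dList (b :: m) f (x + a) := by
  simp only [dList_cons]
  rw [show x + (a + b) = x + a + b by ring]
  ring

lemma isRatR_sum {l : List ℝ} (h : ∀ a ∈ l, IsRatR a) : IsRatR l.sum := by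
  induction l with
  | nil => exact ⟨0, by simp⟩
  | cons a l ih =>
    obtain ⟨q, hq⟩ := h a (by simp)
    obtain ⟨r, hr⟩ := ih (fun b hb => h b (by simp [hb]))
    exact ⟨q + r, by push_cast; rw [hq, hr, List.sum_cons]⟩

lemma isRatR_add {x y : ℝ} (hx : IsRatR x) (hy : IsRatR y) : IsRatR (x + y) := by
  obtain ⟨q, hq⟩ := hx; obtain ⟨r, hr⟩ := hy
  exact ⟨q + r, by push_cast; rw [hq, hr]⟩

lemma dList_congr {l : List ℝ} {f g : ℝ → ℝ} {x : ℝ}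
    (h : ∀ s : List ℝ, s.Sublist l → f (x + s.sum) = g (x + s.sum)) :
    dList l f x = dList l g x := by
  induction l generalizing x with
  | nil =>
    have := h [] (by simp)
    simpa [dList] using this
  | cons a l ih =>
    rw [dList_cons, dList_cons]
    have h1 : dList l f (x + a) = dList l g (x + a) := by
      apply ih
      intro s hs
      have := h (a :: s) (hs.cons₂ a)
      rw [List.sum_cons] at this
      rw [show x + a + s.sum = x + (a + s.sum) by ring]
      exact this
    have h2 : dList l f x = dList l g x := ih (fun s hs => h s (hs.trans (List.sublist_cons_self a l)))
    rw [h1, h2]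

lemma dList_continuousAt {I : Set ℝ} (hIop : IsOpen I) {g : ℝ → ℝ} (hg : ContinuousOn g I) :
    ∀ (l : List ℝ) (y : ℝ), (∀ s : List ℝ, s.Sublist l → y + s.sum ∈ I) →
      ContinuousAt (dList l g) y := by
  intro l
  induction l with
  | nil =>
    intro y hy
    have : y ∈ I := by simpa using hy [] (by simp)
    exact (hg.continuousAt (hIop.mem_nhds this))
  | cons a l ih =>
    intro y hy
    have h1 : ContinuousAt (dList l g) (y + a) := by
      apply ih
      intro s hs
      have := hy (a :: s) (hs.cons₂ a)
      rw [List.sum_cons] at this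
      rw [show y + a + s.sum = y + (a + s.sum) by ring]
      exact this
    have h2 : ContinuousAt (dList l g) y :=
      ih y (fun s hs => hy s (hs.trans (List.sublist_cons_self a l)))
    have h3 : ContinuousAt (dList l g ∘ (· + a)) y :=
      ContinuousAt.comp (f := fun z : ℝ => z + a) (x := y) h1 (by fun_prop)
    exact h3.sub h2

section main

variable {n : ℕ} {I : Set ℝ} {f g : ℝ → ℝ}

lemma mem_between {I : Set ℝ} (hoc : I.OrdConnected) {x z : ℝ} (hx : x ∈ I) (hz : z ∈ I)
    {y : ℝ} (hxy : x ≤ y) (hyz : y ≤ z) : y ∈ I :=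
  hoc.out hx hz ⟨hxy, hyz⟩

lemma head_mono (hf : WrightConvexOrder n I f) (hoc : I.OrdConnected)
    {m : List ℝ} (hm : m.length = n) (hmp : ∀ h ∈ m, 0 < h)
    {a b : ℝ} (ha : 0 < a) (hab : a ≤ b) {x : ℝ} (hx : x ∈ I)
    (hxb : x + b + m.sum ∈ I) : dList (a :: m) f x ≤ dList (b :: m) f x := by
  rcases eq_or_lt_of_le hab with rfl | hlt
  · exact le_rfl
  have hms : (0:ℝ) ≤ m.sum := List.sum_nonneg (fun y hy => (hmp y hy).le)
  have hxa : x + a ∈ I := mem_between hoc hx hxb (by linarith) (by linarith)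
  have key := hf ((b - a) :: m) (by simp [hm]) (by
      intro h hh
      rcases List.mem_cons.mp hh with rfl | hh
      · linarith
      · exact hmp h hh)
    (x + a) hxa (by rw [List.sum_cons]; rw [show x + a + (b - a + m.sum) = x + b + m.sum by ring]; exact hxb)
  have split := dList_head_split a (b - a) m f x
  rw [show a + (b - a) = b by ring] at split
  linarith

/-- Rational base, rational increments. -/
lemma ratCase (hoc : I.OrdConnected) (hfg : ∀ x ∈ I, IsRatR x → f x = g x)
    {l : List ℝ} (hlr : ∀ h ∈ l, IsRatR h) (hlp : ∀ h ∈ l, 0 < h)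
    {x : ℝ} (hx : x ∈ I) (hxr : IsRatR x) (hxs : x + l.sum ∈ I) :
    dList l f x = dList l g x := by
  apply dList_congr
  intro s hs
  have hs0 : (0:ℝ) ≤ s.sum := List.sum_nonneg (fun y hy => (hlp y (hs.subset hy)).le)
  have hsl : s.sum ≤ l.sum := hs.sum_le_sum (fun y hy => (hlp y hy).le)
  have hmem : x + s.sum ∈ I := mem_between hoc hx hxs (by linarith) (by linarith)
  exact hfg _ hmem (isRatR_add hxr (isRatR_sum (fun a ha => hlr a (hs.subset ha))))

/-- Squeeze: turn the head increment from rational to real. -/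
lemma squeeze (hf : WrightConvexOrder n I f) (hIop : IsOpen I) (hoc : I.OrdConnected)
    (hg : ContinuousOn g I)
    {m : List ℝ} (hm : m.length = n) (hmp : ∀ h ∈ m, 0 < h)
    {x k : ℝ} (hk : 0 < k) (hx : x ∈ I) (hdom : x + k + m.sum ∈ I)
    (P : ∀ c : ℝ, 0 < c → x + c + m.sum ∈ I → IsRatR c →
      dList (c :: m) f x = dList (c :: m) g x) :
    dList (k :: m) f x = dList (k :: m) g x := by
  have hms : (0:ℝ) ≤ m.sum := List.sum_nonneg (fun y hy => (hmp y hy).le)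
  set A := dList (k :: m) f x with hA
  set B := dList (k :: m) g x with hB
  -- continuity of r ↦ dList m g (x + r) at k
  have hc : ContinuousAt (fun r : ℝ => dList m g (x + r)) k := by
    have hGy : ContinuousAt (dList m g) (x + k) := by
      apply dList_continuousAt hIop hg
      intro s hs
      have hs0 : (0:ℝ) ≤ s.sum := List.sum_nonneg (fun y hy => (hmp y (hs.subset hy)).le)
      have hsl : s.sum ≤ m.sum := hs.sum_le_sum (fun y hy => (hmp y hy).le)
      exact mem_between hoc hx hdom (by linarith) (by linarith)
    have : ContinuousAt (dList m g ∘ (x + ·)) k := hGy.comp (by fun_prop)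
    exact this
  have key : ∀ ε : ℝ, 0 < ε → |A - B| < ε := by
    intro ε hε
    obtain ⟨δ, hδ, hδc⟩ := Metric.continuousAt_iff.mp hc ε hε
    obtain ⟨δ₂, hδ₂, hball⟩ := Metric.isOpen_iff.mp hIop _ hdom
    set δ' := min δ δ₂ with hδ'
    have hδ'0 : 0 < δ' := lt_min hδ hδ₂
    -- choose rationals q < k < r
    obtain ⟨r, hr1, hr2⟩ := exists_rat_btwn (show k < k + δ' by linarith)
    obtain ⟨q, hq1, hq2⟩ := exists_rat_btwn (show max (k - δ') (k / 2) < k by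
      apply max_lt <;> linarith)
    have hq0 : (0:ℝ) < q := by
      have := lt_of_le_of_lt (le_max_right (k - δ') (k / 2)) hq1
      linarith
    have hqk : (q:ℝ) < k := hq2
    have hqδ : k - δ' < q := lt_of_le_of_lt (le_max_left _ _) hq1
    -- domains
    have hdomq : x + (q:ℝ) + m.sum ∈ I := mem_between hoc hx hdom (by linarith) (by linarith)
    have hdomr : x + (r:ℝ) + m.sum ∈ I := by
      apply hball
      rw [Metric.mem_ball, Real.dist_eq]
      have : |x + (r:ℝ) + m.sum - (x + k + m.sum)| = |(r:ℝ) - k| := by ring_nf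
      rw [this, abs_of_pos (by linarith)]
      have : δ' ≤ δ₂ := min_le_right _ _
      linarith
    -- equalities at rationals
    have hEq : dList ((q:ℝ) :: m) f x = dList ((q:ℝ) :: m) g x :=
      P q hq0 hdomq ⟨q, rfl⟩
    have hEr : dList ((r:ℝ) :: m) f x = dList ((r:ℝ) :: m) g x :=
      P r (by linarith) hdomr ⟨r, rfl⟩
    -- monotonicity
    have hmono1 : dList ((q:ℝ) :: m) f x ≤ A :=
      head_mono hf hoc hm hmp hq0 hqk.le hx hdom
    have hmono2 : A ≤ dList ((r:ℝ) :: m) f x :=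
      head_mono hf hoc hm hmp hk hr1.le hx hdomr
    -- continuity bounds
    have hcq : |dList m g (x + (q:ℝ)) - dList m g (x + k)| < ε := by
      have := hδc (x := (q:ℝ)) (by
        rw [Real.dist_eq, abs_of_nonpos (by linarith)]
        have : δ' ≤ δ := min_le_left _ _
        linarith)
      simpa [Real.dist_eq] using this
    have hcr : |dList m g (x + (r:ℝ)) - dList m g (x + k)| < ε := by
      have := hδc (x := (r:ℝ)) (by
        rw [Real.dist_eq, abs_of_pos (by linarith)]
        have : δ' ≤ δ := min_le_left _ _
        linarith)
      simpa [Real.dist_eq] using this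
    have hBq : dList ((q:ℝ) :: m) g x = dList m g (x + (q:ℝ)) - dList m g x := dList_cons _ _ _ _
    have hBr : dList ((r:ℝ) :: m) g x = dList m g (x + (r:ℝ)) - dList m g x := dList_cons _ _ _ _
    have hBk : B = dList m g (x + k) - dList m g x := dList_cons _ _ _ _
    rw [abs_lt] at hcq hcr ⊢
    constructor
    · -- -ε < A - B : A ≥ dList (q::m) f x = dList (q::m) g x
      have : dList ((q:ℝ) :: m) g x ≤ A := hEq ▸ hmono1
      rw [hBq] at this
      linarith [hcq.1, hcq.2]
    · have : A ≤ dList ((r:ℝ) :: m) g x := hEr ▸ hmono2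
      rw [hBr] at this
      linarith [hcr.1, hcr.2]
  by_contra hne
  have h0 : 0 < |A - B| := abs_pos.mpr (sub_ne_zero.mpr hne)
  exact lt_irrefl _ (key _ h0)

/-- Rational base, arbitrary real increments. -/
lemma ratBase (hf : WrightConvexOrder n I f) (hIop : IsOpen I) (hoc : I.OrdConnected)
    (hg : ContinuousOn g I) (hfg : ∀ x ∈ I, IsRatR x → f x = g x) :
    ∀ (lr lq : List ℝ), (∀ h ∈ lq, IsRatR h) → (lr ++ lq).length = n + 1 →
      (∀ h ∈ lr ++ lq, 0 < h) → ∀ x : ℝ, x ∈ I → IsRatR x →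
      x + (lr ++ lq).sum ∈ I → dList (lr ++ lq) f x = dList (lr ++ lq) g x := by
  intro lr
  induction lr with
  | nil =>
    intro lq hlq hlen hpos x hx hxr hdom
    exact ratCase hoc hfg (by simpa using hlq) (by simpa using hpos) hx hxr (by simpa using hdom)
  | cons k lr' ih =>
    intro lq hlq hlen hpos x hx hxr hdom
    have hperm : ∀ c : ℝ, (c :: (lr' ++ lq)).Perm (lr' ++ c :: lq) := fun c => List.perm_middle.symm
    rw [show (k :: lr') ++ lq = k :: (lr' ++ lq) from rfl] at *
    have hm : (lr' ++ lq).length = n := by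
      simpa using Nat.succ_injective (by simpa using hlen)
    apply squeeze hf hIop hoc hg hm
      (fun h hh => hpos h (List.mem_cons_of_mem _ hh)) (hpos k (by simp)) hx
      (by rw [show x + k + (lr' ++ lq).sum = x + (k :: (lr' ++ lq)).sum by rw [List.sum_cons]; ring]; exact hdom)
    intro c hc hcdom hcr
    rw [dList_perm (hperm c) f, dList_perm (hperm c) g]
    apply ih (c :: lq)
    · intro h hh
      rcases List.mem_cons.mp hh with rfl | hh
      · exact hcr
      · exact hlq h hh
    · have : (lr' ++ c :: lq).length = (c :: (lr' ++ lq)).length := (hperm c).length_eq.symm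
      rw [this]
      simpa using hlen
    · intro h hh
      have : h ∈ c :: (lr' ++ lq) := (hperm c).symm.subset hh
      rcases List.mem_cons.mp this with rfl | hh'
      · exact hc
      · exact hpos h (List.mem_cons_of_mem _ hh')
    · exact hx
    · exact hxr
    · have : (lr' ++ c :: lq).sum = c + (lr' ++ lq).sum := by
        rw [(hperm c).sum_eq.symm, List.sum_cons]
      rw [this, show x + (c + (lr' ++ lq).sum) = x + c + (lr' ++ lq).sum by ring]
      exact hcdom

end main

/-- If f is n-Wright convex, g is continuous and agrees with f on the rationals of I,
then the (n+1)-fold differences of f and g with positive real increments agree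
everywhere on their domain. -/
theorem iterated_difference_agree_real_increments (n : ℕ) (hn : 1 ≤ n) (I : Set ℝ)
    (hI : ProperOpenInterval I) (f g : ℝ → ℝ) (hf : WrightConvexOrder n I f)
    (hg : ContinuousOn g I) (hfg : ∀ x ∈ I, IsRatR x → f x = g x) :
    ∀ l : List ℝ, l.length = n + 1 → (∀ h ∈ l, 0 < h) →
      ∀ x : ℝ, x ∈ I → x + l.sum ∈ I → dList l f x = dList l g x := by
  obtain ⟨hIop, hoc, -, -⟩ := hI
  intro l hlen hpos x hx hdom
  have main : ∀ (l : List ℝ), l.length = n + 1 → (∀ h ∈ l, 0 < h) →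
      ∀ x : ℝ, x ∈ I → IsRatR x → x + l.sum ∈ I → dList l f x = dList l g x := by
    intro l hlen hpos x hx hxr hdom
    have := ratBase hf hIop hoc hg hfg l [] (by simp) (by simpa using hlen)
      (by simpa using hpos) x hx hxr (by simpa using hdom)
    simpa using this
  by_cases hxr : IsRatR x
  · exact main l hlen hpos x hx hxr hdom
  -- real base point: shift to a nearby rational
  cases l with
  | nil => simp at hlen
  | cons h₀ m =>
    have hms : (0:ℝ) ≤ m.sum := List.sum_nonneg (fun y hy => (hpos y (List.mem_cons_of_mem _ hy)).le)
    have hh₀ : 0 < h₀ := hpos h₀ (by simp)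
    obtain ⟨δ, hδ, hball⟩ := Metric.isOpen_iff.mp hIop x hx
    obtain ⟨q, hq1, hq2⟩ := exists_rat_btwn (show x - δ < x by linarith)
    have hqI : (q:ℝ) ∈ I := hball (by rw [Metric.mem_ball, Real.dist_eq, abs_of_neg (by linarith)]; linarith)
    set t := x - q with ht
    have ht0 : 0 < t := by simp only [ht]; linarith
    have hqt : (q:ℝ) + t = x := by simp [ht]
    have hsum : x + (h₀ :: m).sum = x + h₀ + m.sum := by rw [List.sum_cons]; ring
    -- the shift identity
    have idf := dList_head_split t h₀ m f q
    have idg := dList_head_split t h₀ m g q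
    rw [hqt] at idf idg
    have hmlen : m.length = n := Nat.succ_injective (by simpa using hlen)
    have hmpos : ∀ h ∈ m, 0 < h := fun h hh => hpos h (List.mem_cons_of_mem _ hh)
    have e1 : dList ((t + h₀) :: m) f q = dList ((t + h₀) :: m) g q := by
      apply main _ (by simp [hmlen]) _ _ hqI ⟨q, rfl⟩
      · rw [List.sum_cons, show (q:ℝ) + (t + h₀ + m.sum) = x + h₀ + m.sum by rw [ht]; ring]
        rw [← hsum]; exact hdom
      · intro h hh
        rcases List.mem_cons.mp hh with rfl | hh
        · linarith
        · exact hmpos h hh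
    have e2 : dList (t :: m) f q = dList (t :: m) g q := by
      apply main _ (by simp [hmlen]) _ _ hqI ⟨q, rfl⟩
      · rw [List.sum_cons, show (q:ℝ) + (t + m.sum) = x + m.sum by rw [ht]; ring]
        exact hoc.out hx (hsum ▸ hdom) ⟨by linarith, by linarith⟩
      · intro h hh
        rcases List.mem_cons.mp hh with rfl | hh
        · exact ht0
        · exact hmpos h hh
    linarith [idf, idg, e1, e2]
end
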